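/- arXiv:1002.1057 — 4 statements merged into one kernel-verified Lean document; each statement's English description precedes it below -/
import Mathlib

section
/- Fix real numbers p₁ < 1, d₁ < 1 and 0 ≤ x₁ < x₂ < b. There exist c₀ < ∞ and n₀ < ∞ such that for every c ≥ c₀ and every integer n ≥ n₀, the random configuration built from n i.i.d. exponential(c) variables satisfies P( d([x₁, x₂]) ≥ d₁ ) ≥ p₁. (First half of Theorem 2.1 of the paper, reduced to a fixed time via pseudo-stationarity.) -/
/-!
With `0`-based indices, the uncovered part of `[0, ∞)` to the left of interval `K` consists of the
gaps between consecutive intervals, whose lengths `Y_{k+1} - Y_k` telescope to `Y_K`. Only the first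
`K + 1 ≈ n x₂ / b` intervals can start before `x₂`, so `d([x₁, x₂]) ≥ d₁` as soon as
`Y_K ≤ δ := (1 - d₁)(x₂ - x₁)`. Otherwise at least `n - K ≥ (1 - x₂/b) n` of the `Z^k` exceed `δ`;
by independence and a union bound over index sets this has probability at most
`C(n, n-K) e^{-cδ(n-K)} ≤ 2ⁿ 4⁻ⁿ` once `c δ (1 - x₂/b) ≥ log 4`, which is `< 1 - p₁` for large `n`.
-/

open MeasureTheory ProbabilityTheory Set Finset
open scoped ENNReal

/-- The union of the intervals `I^{k+1} = (y k + k ε, y k + k ε + ε)`, indexed from `0`. -/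
def intervalUnion {n : ℕ} (y : Fin n → ℝ) (ε : ℝ) : Set ℝ :=
  ⋃ k : Fin n, Ioo (y k + k * ε) (y k + k * ε + ε)

section Geometry

variable {n : ℕ} {y : Fin n → ℝ} {ε : ℝ}

lemma volume_Ico_diff_intervalUnion_le (hy : Monotone y) (hy0 : ∀ k, 0 ≤ y k) (m : ℕ)
    (hm : m < n) :
    volume (Ico 0 (y ⟨m, hm⟩ + (m + 1) * ε) \ intervalUnion y ε) ≤ ENNReal.ofReal (y ⟨m, hm⟩) := by
  induction m with
  | zero =>
    calc volume (Ico 0 (y ⟨0, hm⟩ + ((0 : ℕ) + 1) * ε) \ intervalUnion y ε)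
        ≤ volume (Icc 0 (y ⟨0, hm⟩)) := by
          refine measure_mono fun x ⟨hx, hxU⟩ => ⟨hx.1, not_lt.1 fun hlt => hxU ?_⟩
          exact mem_iUnion.2 ⟨⟨0, hm⟩, by simpa using hlt, by simpa using hx.2⟩
      _ = ENNReal.ofReal (y ⟨0, hm⟩) := by rw [Real.volume_Icc, sub_zero]
  | succ m ih =>
    have hm' : m < n := by omega
    set A := y ⟨m, hm'⟩ + (m + 1) * ε
    set B := y ⟨m + 1, hm⟩ + ((m + 1 : ℕ) : ℝ) * ε
    have hsub : Ico 0 (B + ε) \ intervalUnion y ε ⊆ (Ico 0 A \ intervalUnion y ε) ∪ Icc A B := by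
      rintro x ⟨hx, hxU⟩
      rcases lt_or_ge x A with hxA | hxA
      · exact Or.inl ⟨⟨hx.1, hxA⟩, hxU⟩
      refine Or.inr ⟨hxA, not_lt.1 fun hBx => hxU (mem_iUnion.2 ⟨⟨m + 1, hm⟩, hBx, hx.2⟩)⟩
    calc volume (Ico 0 (y ⟨m + 1, hm⟩ + ((m + 1 : ℕ) + 1) * ε) \ intervalUnion y ε)
        ≤ volume (Ico 0 A \ intervalUnion y ε) + volume (Icc A B) := by
          refine (measure_mono ?_).trans (measure_union_le _ _)
          convert hsub using 3
          ring
      _ ≤ ENNReal.ofReal (y ⟨m, hm'⟩) + ENNReal.ofReal (y ⟨m + 1, hm⟩ - y ⟨m, hm'⟩) := by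
          gcongr
          · exact ih hm'
          · rw [Real.volume_Icc]
            exact le_of_eq (congrArg ENNReal.ofReal (by simp only [A, B]; push_cast; ring))
      _ = ENNReal.ofReal (y ⟨m + 1, hm⟩) := by
          rw [← ENNReal.ofReal_add (hy0 _) (sub_nonneg.2 (hy (Fin.mk_le_mk.2 m.le_succ))),
            add_sub_cancel]

lemma le_volume_inter_intervalUnion_div {K : ℕ} (hK : K < n) (hy : Monotone y)
    (hy0 : ∀ k, 0 ≤ y k) {x₁ x₂ d : ℝ} (hx₁ : 0 ≤ x₁) (hx₁₂ : x₁ < x₂) (hx₂ : x₂ < (K + 1) * ε)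
    (hyK : y ⟨K, hK⟩ ≤ (1 - d) * (x₂ - x₁)) :
    d ≤ (volume (Icc x₁ x₂ ∩ intervalUnion y ε)).toReal / (x₂ - x₁) := by
  have hgap : volume (Icc x₁ x₂ \ intervalUnion y ε) ≤ ENNReal.ofReal (y ⟨K, hK⟩) := by
    refine (measure_mono (sdiff_subset_sdiff_left ?_)).trans
      (volume_Ico_diff_intervalUnion_le hy hy0 K hK)
    exact (Icc_subset_Ico_iff hx₁₂.le).2 ⟨hx₁, by linarith [hy0 ⟨K, hK⟩]⟩
  have hfin : volume (Icc x₁ x₂ ∩ intervalUnion y ε) ≠ ∞ :=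
    measure_ne_top_of_subset inter_subset_left (by simp)
  have hcover : ENNReal.ofReal (x₂ - x₁) ≤
      ENNReal.ofReal ((volume (Icc x₁ x₂ ∩ intervalUnion y ε)).toReal + y ⟨K, hK⟩) := by
    rw [ENNReal.ofReal_add ENNReal.toReal_nonneg (hy0 _), ENNReal.ofReal_toReal hfin,
      ← Real.volume_Icc]
    exact (measure_le_inter_add_sdiff _ _ _).trans (by gcongr)
  rw [ENNReal.ofReal_le_ofReal_iff (add_nonneg ENNReal.toReal_nonneg (hy0 _))] at hcover
  rw [le_div_iff₀ (sub_pos.2 hx₁₂)]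
  linarith

end Geometry

lemma le_of_card_filter_lt_sub {α : Type*} [LinearOrder α] {n K : ℕ} (hK : K < n)
    {y z : Fin n → α} (π : Equiv.Perm (Fin n)) (hyz : ∀ k, y k = z (π k)) (hy : Monotone y)
    {t : α} (hz : #{k | t < z k} < n - K) : y ⟨K, hK⟩ ≤ t := by
  by_contra! hlt
  refine hz.not_ge ?_
  calc n - K = #(Ici (⟨K, hK⟩ : Fin n)) := (Fin.card_Ici (⟨K, hK⟩ : Fin n)).symm
    _ ≤ #{k | t < z k} := by
      refine card_le_card_of_injOn π (fun k hk => ?_) π.injective.injOn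
      rw [mem_coe, Finset.mem_Ici] at hk
      simpa [← hyz k] using hlt.trans_le (hy hk)

lemma measure_le_card_filter_mem_le {ι Ω β : Type*} [Fintype ι] [MeasurableSpace Ω]
    [MeasurableSpace β] {μ : Measure Ω} {Z : ι → Ω → β} (hZ : iIndepFun Z μ) {S : Set β}
    (hS : MeasurableSet S) [DecidablePred (· ∈ S)] {q : ℝ≥0∞} (hq : ∀ i, μ (Z i ⁻¹' S) ≤ q)
    (M : ℕ) :
    μ {ω | M ≤ #{i | Z i ω ∈ S}} ≤ (Fintype.card ι).choose M * q ^ M := by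
  calc μ {ω | M ≤ #{i | Z i ω ∈ S}}
      ≤ μ (⋃ T ∈ powersetCard M univ, ⋂ i ∈ T, Z i ⁻¹' S) := measure_mono fun ω hω => by
        obtain ⟨T, hT, hcard⟩ := exists_subset_card_eq (s := {i | Z i ω ∈ S}) hω
        exact mem_biUnion (mem_powersetCard.2 ⟨subset_univ T, hcard⟩)
          (mem_iInter₂.2 fun i hi => (mem_filter.1 (hT hi)).2)
    _ ≤ ∑ T ∈ powersetCard M univ, μ (⋂ i ∈ T, Z i ⁻¹' S) := measure_biUnion_finset_le _ _
    _ ≤ ∑ _T ∈ powersetCard M (univ : Finset ι), q ^ M := sum_le_sum fun T hT => by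
        rw [hZ.meas_biInter fun i _ => ⟨S, hS, rfl⟩, ← (mem_powersetCard.1 hT).2]
        exact prod_le_pow_card _ _ _ fun i _ => hq i
    _ = (Fintype.card ι).choose M * q ^ M := by
        rw [sum_const, card_powersetCard, card_univ, nsmul_eq_mul]

lemma expMeasure_Ioi {r x : ℝ} (hr : 0 < r) (hx : 0 ≤ x) :
    expMeasure r (Ioi x) = ENNReal.ofReal (Real.exp (-(r * x))) := by
  have := isProbabilityMeasure_expMeasure hr
  have hle : Real.exp (-(r * x)) ≤ 1 := Real.exp_le_one_iff.2 (neg_nonpos.2 (mul_nonneg hr.le hx))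
  rw [← compl_Iic, prob_compl_eq_one_sub measurableSet_Iic, ← ofReal_cdf, cdf_expMeasure_eq hr,
    if_pos hx, ← ENNReal.ofReal_one, ← ENNReal.ofReal_sub _ (sub_nonneg.2 hle), sub_sub_cancel]

lemma ae_nonneg_expMeasure (r : ℝ) : ∀ᵐ x ∂expMeasure r, 0 ≤ x := by
  have hneg : {x : ℝ | ¬0 ≤ x} = Set.Iio 0 := by ext; simp
  rw [ae_iff, hneg, expMeasure, gammaMeasure, withDensity_apply _ measurableSet_Iio]
  exact lintegral_exponentialPDF_of_nonpos le_rfl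

section IIDExponential

variable {ι Ω : Type*} [Fintype ι] [MeasurableSpace Ω] {μ : Measure Ω} {Z : ι → Ω → ℝ} {c : ℝ}

lemma ae_forall_nonneg_of_map_eq_expMeasure (hc : 0 < c)
    (hlaw : ∀ i, Measure.map (Z i) μ = expMeasure c) : ∀ᵐ ω ∂μ, ∀ i, 0 ≤ Z i ω := by
  have := isProbabilityMeasure_expMeasure hc
  refine ae_all_iff.2 fun i => ae_of_ae_map ?_ (by rw [hlaw i]; exact ae_nonneg_expMeasure c)
  exact aemeasurable_of_map_neZero (by rw [hlaw i]; infer_instance)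

lemma measure_le_card_filter_gt_le (hZ : iIndepFun Z μ) (hc : 0 < c)
    (hlaw : ∀ i, Measure.map (Z i) μ = expMeasure c) {δ : ℝ} (hδ : 0 ≤ δ) (M : ℕ) :
    μ {ω | M ≤ #{i | Z i ω ∈ Ioi δ}} ≤
      ENNReal.ofReal ((Fintype.card ι).choose M * Real.exp (-(c * δ)) ^ M) := by
  have := isProbabilityMeasure_expMeasure hc
  have htail : ∀ i, μ (Z i ⁻¹' Ioi δ) = ENNReal.ofReal (Real.exp (-(c * δ))) := fun i => by
    rw [← Measure.map_apply_of_aemeasurable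
      (aemeasurable_of_map_neZero (by rw [hlaw i]; infer_instance)) measurableSet_Ioi, hlaw i,
      expMeasure_Ioi hc hδ]
  rw [ENNReal.ofReal_mul (by positivity), ENNReal.ofReal_pow (Real.exp_pos _).le,
    ENNReal.ofReal_natCast]
  exact measure_le_card_filter_mem_le hZ measurableSet_Ioi (fun i => (htail i).le) M

end IIDExponential

lemma exists_lt_succ_mul_div_and_le_sub {x b : ℝ} (hx : 0 ≤ x) (hxb : x < b) {n : ℕ}
    (hn : 0 < n) :
    ∃ K < n, x < (K + 1) * (b / n) ∧ (1 - x / b) * n ≤ ((n - K : ℕ) : ℝ) := by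
  have hb : 0 < b := hx.trans_lt hxb
  have hnR : (0 : ℝ) < n := Nat.cast_pos.2 hn
  have hxn : 0 ≤ x * n / b := by positivity
  have hKn : ⌊x * n / b⌋₊ < n := by
    rw [Nat.floor_lt hxn, div_lt_iff₀ hb]
    nlinarith
  refine ⟨⌊x * n / b⌋₊, hKn, ?_, ?_⟩
  · have := Nat.lt_floor_add_one (x * n / b)
    rwa [div_lt_iff₀ hb, ← lt_div_iff₀ hnR, mul_div_assoc] at this
  · rw [Nat.cast_sub hKn.le]
    calc (1 - x / b) * n = n - x * n / b := by ring
      _ ≤ _ := by linarith [Nat.floor_le hxn]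

lemma choose_mul_exp_neg_pow_le {n M : ℕ} {θ a : ℝ} (hθ : 0 < θ) (hM : θ * n ≤ M)
    (ha : Real.log 4 ≤ a * θ) : (n.choose M : ℝ) * Real.exp (-a) ^ M ≤ (1 / 2) ^ n := by
  have ha0 : 0 ≤ a := by
    by_contra! h
    nlinarith [Real.log_pos (by norm_num : (1 : ℝ) < 4)]
  have hexp : Real.exp (-a) ^ M ≤ (1 / 4) ^ n := by
    calc Real.exp (-a) ^ M = Real.exp (M * -a) := (Real.exp_nat_mul _ _).symm
      _ ≤ Real.exp (n * -Real.log 4) := by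
        refine Real.exp_le_exp.2 ?_
        nlinarith [mul_le_mul_of_nonneg_left ha n.cast_nonneg,
          mul_le_mul_of_nonneg_left hM ha0]
      _ = (1 / 4) ^ n := by
        rw [Real.exp_nat_mul, Real.exp_neg, Real.exp_log (by norm_num)]
        norm_num
  calc (n.choose M : ℝ) * Real.exp (-a) ^ M ≤ 2 ^ n * (1 / 4) ^ n :=
        mul_le_mul (by exact_mod_cast Nat.choose_le_two_pow n M) hexp (by positivity)
          (by positivity)
    _ = (1 / 2) ^ n := by rw [← mul_pow]; norm_num

lemma ofReal_le_prob_compl_of_le {Ω : Type*} [MeasurableSpace Ω] {μ : Measure Ω}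
    [IsProbabilityMeasure μ] {s : Set Ω} {p : ℝ} (hp : p ≤ 1)
    (hs : μ s ≤ ENNReal.ofReal (1 - p)) : ENNReal.ofReal p ≤ μ sᶜ := by
  calc ENNReal.ofReal p = 1 - ENNReal.ofReal (1 - p) := by
        rw [← ENNReal.ofReal_one, ← ENNReal.ofReal_sub _ (sub_nonneg.2 hp), sub_sub_cancel]
    _ ≤ 1 - μ s := tsub_le_tsub_left hs 1
    _ ≤ μ sᶜ := tsub_le_iff_left.2 (by simpa using measure_univ_le_add_compl (μ := μ) s)

theorem crowding_density_high_left_general (p₁ d₁ b x₁ x₂ : ℝ)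
    (hp₁ : p₁ < 1) (hd₁ : d₁ < 1) (hx₁ : 0 ≤ x₁) (hx₁₂ : x₁ < x₂) (hx₂b : x₂ < b) :
    ∃ (c₀ : ℝ) (n₀ : ℕ), ∀ c : ℝ, c₀ ≤ c → ∀ n : ℕ, n₀ ≤ n → 1 ≤ n →
      ∀ (Ω : Type) [MeasurableSpace Ω] (μ : Measure Ω), IsProbabilityMeasure μ →
        ∀ Z Y : Fin n → Ω → ℝ,
          iIndepFun Z μ →
          (∀ k, Measure.map (Z k) μ = expMeasure c) →
          (∀ ω : Ω, ∃ π : Equiv.Perm (Fin n),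
            (∀ k, Y k ω = Z (π k) ω) ∧ Monotone fun k => Y k ω) →
          ENNReal.ofReal p₁ ≤
            μ {ω : Ω | d₁ ≤
              (volume (Set.Icc x₁ x₂ ∩
                  ⋃ k : Fin n,
                    Set.Ioo (Y k ω + k * (b / n)) (Y k ω + k * (b / n) + b / n))).toReal
                / (x₂ - x₁)} := by
  set δ := (1 - d₁) * (x₂ - x₁)
  set θ := 1 - x₂ / b
  have hδ : 0 < δ := mul_pos (sub_pos.2 hd₁) (sub_pos.2 hx₁₂)
  have hθ : 0 < θ := sub_pos.2 ((div_lt_one (by linarith)).2 hx₂b)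
  obtain ⟨n₀, hn₀⟩ := exists_pow_lt_of_lt_one (sub_pos.2 hp₁) (by norm_num : (1 / 2 : ℝ) < 1)
  refine ⟨Real.log 4 / (δ * θ), n₀, fun c hc n hn hn1 Ω _ μ _ Z Y hZ hlaw hY => ?_⟩
  have hcδθ : Real.log 4 ≤ c * δ * θ := by
    rw [mul_assoc, ← div_le_iff₀ (mul_pos hδ hθ)]; exact hc
  have hc0 : 0 < c :=
    (div_pos (Real.log_pos (by norm_num)) (mul_pos hδ hθ)).trans_le hc
  obtain ⟨K, hKn, hx₂K, hθK⟩ := exists_lt_succ_mul_div_and_le_sub (hx₁.trans hx₁₂.le) hx₂b hn1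
  have hbad : μ {ω | n - K ≤ #{k | Z k ω ∈ Ioi δ}} ≤ ENNReal.ofReal (1 - p₁) := by
    refine (measure_le_card_filter_gt_le hZ hc0 hlaw hδ.le (n - K)).trans ?_
    rw [Fintype.card_fin]
    exact ENNReal.ofReal_le_ofReal <| (choose_mul_exp_neg_pow_le hθ hθK hcδθ).trans <|
      (pow_le_pow_of_le_one (by norm_num) (by norm_num) hn).trans hn₀.le
  refine (ofReal_le_prob_compl_of_le hp₁.le hbad).trans <| measure_mono_ae <|
    (ae_forall_nonneg_of_map_eq_expMeasure hc0 hlaw).mono fun ω hω hgood => ?_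
  obtain ⟨π, hπ, hmono⟩ := hY ω
  exact le_volume_inter_intervalUnion_div hKn hmono (fun k => hπ k ▸ hω _) hx₁ hx₁₂ hx₂K
    (le_of_card_filter_lt_sub (z := fun k => Z k ω) hKn π hπ hmono (not_le.1 hgood))

/-- First half of Theorem 2.1 (at a fixed time, via pseudo-stationarity): for
`p₁ < 1`, `d₁ < 1`, `0 ≤ x₁ < x₂ < b`, there exist `c₀` and `n₀` such that for every
`c ≥ c₀` and every `n ≥ n₀`, the configuration of `n` intervals of length `ε = b/n`
whose centers are `X^k = Y^k + (k−1)ε + ε/2` (with `Y` the nondecreasing rearrangement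
of `n` i.i.d. exponential(`c`) variables `Z`) satisfies
`P( d([x₁, x₂]) ≥ d₁ ) ≥ p₁`, where
`d([u, w]) = λ([u, w] ∩ ⋃_k I^k)/(w − u)` and `I^k = (X^k − ε/2, X^k + ε/2)`.
(Indices are `0`-based, so `X_k = Y_k + kε + ε/2` and `I^k = (Y_k + kε, Y_k + kε + ε)`.) -/
theorem crowding_density_high_left (p₁ d₁ b x₁ x₂ : ℝ) (hb : 0 < b)
    (hp₁ : p₁ < 1) (hd₁ : d₁ < 1) (hx₁ : 0 ≤ x₁) (hx₁₂ : x₁ < x₂) (hx₂b : x₂ < b) :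
    ∃ (c₀ : ℝ) (n₀ : ℕ), ∀ c : ℝ, c₀ ≤ c → ∀ n : ℕ, n₀ ≤ n → 1 ≤ n →
      ∀ (Ω : Type) [MeasurableSpace Ω] (μ : Measure Ω), IsProbabilityMeasure μ →
        ∀ Z Y : Fin n → Ω → ℝ,
          iIndepFun Z μ →
          (∀ k, Measure.map (Z k) μ = expMeasure c) →
          (∀ ω : Ω, ∃ π : Equiv.Perm (Fin n),
            (∀ k, Y k ω = Z (π k) ω) ∧ Monotone fun k => Y k ω) →
          ENNReal.ofReal p₁ ≤
            μ {ω : Ω | d₁ ≤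
              (volume (Set.Icc x₁ x₂ ∩
                  ⋃ k : Fin n,
                    Set.Ioo (Y k ω + k * (b / n)) (Y k ω + k * (b / n) + b / n))).toReal
                / (x₂ - x₁)} :=
  crowding_density_high_left_general p₁ d₁ b x₁ x₂ hp₁ hd₁ hx₁ hx₁₂ hx₂b
end

section
/- Fix real numbers p₁ < 1, d₂ > 0 and b < x₃ < x₄ < ∞. There exist c₀ < ∞ and n₀ < ∞ such that for every c ≥ c₀ and every integer n ≥ n₀, the random configuration built from n i.i.d. exponential(c) variables satisfies P( d([x₃, x₄]) ≤ d₂ ) ≥ p₁. (Second half of Theorem 2.1 of the paper, reduced to a fixed time via pseudo-stationarity.) -/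
/-!
The `k`-th interval ends at `Y k + (k + 1) b / n ≤ Y k + b`, so it can meet `[x₃, x₄]` only if
`Y k > x₃ - b`, and it contributes at most `b / n` to the covered length. Hence a density above `d₂`
forces the number `N` of indices with `Z k > x₃ - b` (a permutation-invariant count) to be at
least `δ n`, where `δ = d₂ (x₄ - x₃) / b`. Since `E N = n e^{-c (x₃ - b)}`, Markov's inequality
bounds the probability of this by `e^{-c (x₃ - b)} / δ`, which is at most `1 - p₁` for all large
`c`, uniformly in `n`.
-/

open MeasureTheory ProbabilityTheory Set Finset Filter Topology
open scoped ENNReal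

lemma expMeasure_Ioi_s1 {c t : ℝ} (hc : 0 < c) (ht : 0 ≤ t) :
    expMeasure c (Ioi t) = ENNReal.ofReal (Real.exp (-(c * t))) := by
  have := isProbabilityMeasure_expMeasure hc
  have hexp : Real.exp (-(c * t)) ≤ 1 := Real.exp_le_one_iff.2 (by nlinarith)
  rw [← compl_Iic, prob_compl_eq_one_sub measurableSet_Iic, ← ofReal_cdf, cdf_expMeasure_eq hc,
    if_pos ht, ← ENNReal.ofReal_one, ← ENNReal.ofReal_sub _ (sub_nonneg.2 hexp), sub_sub_cancel]

lemma card_filter_mem_eq_of_perm {ι α : Type*} [Fintype ι] {y z : ι → α} (σ : Equiv.Perm ι)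
    (h : ∀ i, y i = z (σ i)) (s : Set α) [DecidablePred fun i => y i ∈ s]
    [DecidablePred fun i => z i ∈ s] :
    #{i | y i ∈ s} = #{i | z i ∈ s} :=
  Finset.card_nbij' σ σ.symm (fun i hi => by simpa [h] using hi)
    (fun i hi => by simpa [h] using hi) (fun i _ => by simp) (fun i _ => by simp)

lemma volume_Ici_inter_iUnion_Ioo_le {ι : Type*} [Fintype ι] (x ε : ℝ) (a : ι → ℝ) :
    volume (Ici x ∩ ⋃ i, Ioo (a i) (a i + ε)) ≤ #{i | x < a i + ε} * ENNReal.ofReal ε := by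
  have hsub : Ici x ∩ ⋃ i, Ioo (a i) (a i + ε) ⊆ ⋃ i ∈ ({i | x < a i + ε} : Finset ι),
      Ioo (a i) (a i + ε) := by
    rintro y ⟨hxy, hy⟩
    obtain ⟨i, hi⟩ := mem_iUnion.1 hy
    exact mem_biUnion (by simpa using (mem_Ici.1 hxy).trans_lt hi.2) hi
  calc volume (Ici x ∩ ⋃ i, Ioo (a i) (a i + ε))
      ≤ ∑ i ∈ ({i | x < a i + ε} : Finset ι), volume (Ioo (a i) (a i + ε)) :=
        (measure_mono hsub).trans (measure_biUnion_finset_le _ _)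
    _ = #{i | x < a i + ε} * ENNReal.ofReal ε := by simp [Real.volume_Ioo]

lemma volume_Icc_inter_iUnion_Ioo_staggered_le {n : ℕ} {b : ℝ} (hb : 0 ≤ b) (u w : ℝ)
    (y : Fin n → ℝ) :
    (volume (Icc u w ∩ ⋃ k : Fin n, Ioo (y k + k * (b / n)) (y k + k * (b / n) + b / n))).toReal ≤
      #{k | y k ∈ Ioi (u - b)} * (b / n) := by
  have hend (k : Fin n) : (k : ℝ) * (b / n) + b / n ≤ b := by
    have hk : (k : ℝ) + 1 ≤ n := by exact_mod_cast k.isLt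
    rw [← add_one_mul, mul_div_assoc']
    exact div_le_of_le_mul₀ (Nat.cast_nonneg n) hb (by nlinarith)
  have hcard : #{k | u < y k + k * (b / n) + b / n} ≤ #{k | y k ∈ Ioi (u - b)} :=
    card_le_card fun k hk => by
      simp only [Finset.mem_filter, Finset.mem_univ, true_and, Set.mem_Ioi] at hk ⊢
      linarith [hend k]
  have hvol : volume (Icc u w ∩ ⋃ k : Fin n, Ioo (y k + k * (b / n)) (y k + k * (b / n) + b / n))
      ≤ #{k | y k ∈ Ioi (u - b)} * ENNReal.ofReal (b / n) :=
    calc _ ≤ volume (Ici u ∩ ⋃ k : Fin n, Ioo (y k + k * (b / n)) (y k + k * (b / n) + b / n)) :=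
          measure_mono (inter_subset_inter_left _ Icc_subset_Ici_self)
      _ ≤ #{k | u < y k + k * (b / n) + b / n} * ENNReal.ofReal (b / n) :=
          volume_Ici_inter_iUnion_Ioo_le u (b / n) fun k => y k + k * (b / n)
      _ ≤ #{k | y k ∈ Ioi (u - b)} * ENNReal.ofReal (b / n) := by gcongr
  calc _ ≤ (#{k | y k ∈ Ioi (u - b)} * ENNReal.ofReal (b / n)).toReal :=
        ENNReal.toReal_mono (by finiteness) hvol
    _ = #{k | y k ∈ Ioi (u - b)} * (b / n) := by
        rw [ENNReal.toReal_mul, ENNReal.toReal_natCast, ENNReal.toReal_ofReal (by positivity)]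

lemma le_card_of_lt_density {n : ℕ} {b u w d : ℝ} (hb : 0 < b) (hn : 0 < n) (huw : u < w)
    (y : Fin n → ℝ)
    (h : d < (volume (Icc u w ∩ ⋃ k : Fin n,
      Ioo (y k + k * (b / n)) (y k + k * (b / n) + b / n))).toReal / (w - u)) :
    d * (w - u) / b * n ≤ #{k | y k ∈ Ioi (u - b)} := by
  have hn' : (0 : ℝ) < n := by exact_mod_cast hn
  rw [lt_div_iff₀ (sub_pos.2 huw)] at h
  have h' := h.trans_le (volume_Icc_inter_iUnion_Ioo_staggered_le hb.le u w y)
  rw [mul_div_assoc', lt_div_iff₀ hn'] at h'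
  rw [div_mul_eq_mul_div, div_le_iff₀ hb]
  exact h'.le

lemma measure_le_card_filter_mem_le_s1 {ι Ω : Type*} [Fintype ι] [MeasurableSpace Ω]
    {μ : Measure Ω} {Z : ι → Ω → ℝ} (hZ : ∀ k, AEMeasurable (Z k) μ) {s : Set ℝ}
    [DecidablePred (· ∈ s)] (hs : MeasurableSet s) {r : ℝ} (hr : 0 < r) :
    μ {ω | r ≤ #{k | Z k ω ∈ s}} ≤ (∑ k, μ.map (Z k) s) / ENNReal.ofReal r := by
  have hcount (ω : Ω) : (#{k | Z k ω ∈ s} : ℝ≥0∞) = ∑ k, s.indicator 1 (Z k ω) := by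
    rw [natCast_card_filter]
    simp only [Set.indicator_apply, Pi.one_apply]
  have hind (k : ι) : AEMeasurable (fun ω => s.indicator (1 : ℝ → ℝ≥0∞) (Z k ω)) μ :=
    (measurable_one.indicator hs).comp_aemeasurable (hZ k)
  calc μ {ω | r ≤ #{k | Z k ω ∈ s}}
      ≤ μ {ω | ENNReal.ofReal r ≤ ∑ k, s.indicator 1 (Z k ω)} := by
        refine measure_mono fun ω hω => ?_
        simpa [← hcount] using ENNReal.ofReal_le_ofReal hω
    _ ≤ (∫⁻ ω, ∑ k, s.indicator 1 (Z k ω) ∂μ) / ENNReal.ofReal r :=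
        meas_ge_le_lintegral_div (Finset.aemeasurable_fun_sum _ fun k _ => hind k)
          (by simpa using hr) ENNReal.ofReal_ne_top
    _ = (∑ k, μ.map (Z k) s) / ENNReal.ofReal r := by
        rw [lintegral_finsetSum' _ fun k _ => hind k]
        congr 1
        refine Finset.sum_congr rfl fun k _ => ?_
        rw [← lintegral_map' (measurable_one.indicator hs).aemeasurable (hZ k),
          lintegral_indicator_one hs]

lemma ofReal_le_measure_of_measure_compl_le {Ω : Type*} [MeasurableSpace Ω] {μ : Measure Ω}
    [IsProbabilityMeasure μ] {s : Set Ω} {p : ℝ} (hp : p ≤ 1)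
    (h : μ sᶜ ≤ ENNReal.ofReal (1 - p)) : ENNReal.ofReal p ≤ μ s :=
  calc ENNReal.ofReal p = 1 - ENNReal.ofReal (1 - p) := by
        rw [← ENNReal.ofReal_one, ← ENNReal.ofReal_sub _ (by linarith), sub_sub_cancel]
    _ ≤ 1 - μ sᶜ := tsub_le_tsub_left h 1
    _ ≤ μ s := tsub_le_iff_right.2 (by simpa using measure_univ_le_add_compl (μ := μ) s)

lemma exists_forall_ge_exp_neg_mul_le {t s : ℝ} (ht : 0 < t) (hs : 0 < s) :
    ∃ c₀, ∀ c ≥ c₀, 0 < c ∧ Real.exp (-(c * t)) ≤ s := by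
  have hlim : Tendsto (fun c => Real.exp (-(c * t))) atTop (𝓝 0) :=
    Real.tendsto_exp_atBot.comp (tendsto_neg_atTop_atBot.comp (tendsto_id.atTop_mul_const ht))
  exact eventually_atTop.1 <| (eventually_gt_atTop 0).and <| hlim.eventually (ge_mem_nhds hs)

/-- Second half of Theorem 2.1 (at a fixed time, via pseudo-stationarity): for
`p₁ < 1`, `d₂ > 0`, `b < x₃ < x₄ < ∞`, there exist `c₀` and `n₀` such that for every
`c ≥ c₀` and every `n ≥ n₀`, the configuration of `n` intervals of length `ε = b/n`
whose centers are `X^k = Y^k + (k−1)ε + ε/2` (with `Y` the nondecreasing rearrangement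
of `n` i.i.d. exponential(`c`) variables `Z`) satisfies
`P( d([x₃, x₄]) ≤ d₂ ) ≥ p₁`, where
`d([u, w]) = λ([u, w] ∩ ⋃_k I^k)/(w − u)` and `I^k = (X^k − ε/2, X^k + ε/2)`.
(Indices are `0`-based, so `X_k = Y_k + kε + ε/2` and `I^k = (Y_k + kε, Y_k + kε + ε)`.) -/
theorem crowding_density_low_right (p₁ d₂ b x₃ x₄ : ℝ) (hb : 0 < b)
    (hp₁ : p₁ < 1) (hd₂ : 0 < d₂) (hbx₃ : b < x₃) (hx₃₄ : x₃ < x₄) :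
    ∃ (c₀ : ℝ) (n₀ : ℕ), ∀ c : ℝ, c₀ ≤ c → ∀ n : ℕ, n₀ ≤ n → 1 ≤ n →
      ∀ (Ω : Type) [MeasurableSpace Ω] (μ : Measure Ω), IsProbabilityMeasure μ →
        ∀ Z Y : Fin n → Ω → ℝ,
          iIndepFun Z μ →
          (∀ k, Measure.map (Z k) μ = expMeasure c) →
          (∀ ω : Ω, ∃ π : Equiv.Perm (Fin n),
            (∀ k, Y k ω = Z (π k) ω) ∧ Monotone fun k => Y k ω) →
          ENNReal.ofReal p₁ ≤
            μ {ω : Ω |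
              (volume (Set.Icc x₃ x₄ ∩
                  ⋃ k : Fin n,
                    Set.Ioo (Y k ω + k * (b / n)) (Y k ω + k * (b / n) + b / n))).toReal
                / (x₄ - x₃) ≤ d₂} := by
  set t := x₃ - b
  have ht : 0 < t := sub_pos.2 hbx₃
  set δ := d₂ * (x₄ - x₃) / b
  have hδ : 0 < δ := div_pos (mul_pos hd₂ (sub_pos.2 hx₃₄)) hb
  obtain ⟨c₀, hc₀⟩ := exists_forall_ge_exp_neg_mul_le ht (mul_pos (sub_pos.2 hp₁) hδ)
  refine ⟨c₀, 1, fun c hc n _ hn Ω _ μ _ Z Y _ hZ hY => ?_⟩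
  obtain ⟨hc, hexp⟩ := hc₀ c hc
  have hZae (k : Fin n) : AEMeasurable (Z k) μ :=
    .of_map_ne_zero (by rw [hZ k]; exact (isProbabilityMeasure_expMeasure hc).ne_zero)
  have hbad : {ω | (volume (Icc x₃ x₄ ∩ ⋃ k : Fin n,
      Ioo (Y k ω + k * (b / n)) (Y k ω + k * (b / n) + b / n))).toReal / (x₄ - x₃) ≤ d₂}ᶜ ⊆
      {ω | δ * n ≤ #{k | Z k ω ∈ Ioi t}} := by
    intro ω hω
    obtain ⟨σ, hσ, -⟩ := hY ω
    rw [mem_ofPred_eq, ← card_filter_mem_eq_of_perm (y := (Y · ω)) σ hσ]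
    exact le_card_of_lt_density hb hn hx₃₄ _ (not_le.1 hω)
  refine ofReal_le_measure_of_measure_compl_le hp₁.le ?_
  calc _ ≤ μ {ω | δ * n ≤ #{k | Z k ω ∈ Ioi t}} := measure_mono hbad
    _ ≤ (∑ k, μ.map (Z k) (Ioi t)) / ENNReal.ofReal (δ * n) :=
        measure_le_card_filter_mem_le_s1 hZae measurableSet_Ioi (by positivity)
    _ = ENNReal.ofReal (Real.exp (-(c * t)) / δ) := by
        have hn' : (0 : ℝ) < n := by exact_mod_cast hn
        simp only [hZ, expMeasure_Ioi_s1 hc ht.le, sum_const, card_univ,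
          Fintype.card_fin, nsmul_eq_mul]
        rw [← ENNReal.ofReal_natCast, ← ENNReal.ofReal_mul hn'.le,
          ← ENNReal.ofReal_div_of_pos (by positivity), mul_comm δ, mul_div_mul_left _ _ hn'.ne']
    _ ≤ ENNReal.ofReal (1 - p₁) := ENNReal.ofReal_le_ofReal ((div_le_iff₀ hδ).2 hexp)
end

section
/- Let b, c > 0 and 0 ≤ y₁ < y₂, set x₂ = y₂ + b − b·e^{−c·y₂}, and assume x₂ < b. Then b·∫_{y₁}^{y₂} c·e^{−cz} dz / ( y₂ − y₁ + b·∫_{y₁}^{y₂} c·e^{−cz} dz ) ≥ c·(b − x₂) / ( 1 + c·(b − x₂) ). -/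
/-! Writing `Eᵢ = e^{−c·yᵢ}`, the integral equals `E₁ − E₂`, and convexity of `exp` gives
`E₁ − E₂ ≥ c·(y₂ − y₁)·E₂`. Since `y₂ ≥ 0`, also `b − x₂ = b·E₂ − y₂ ≤ b·E₂`, so the numerator
`t = b·(E₁ − E₂)` satisfies `t ≥ s·L` with `s = c·(b − x₂)` and `L = y₂ − y₁`, which is exactly
the condition for `t/(L + t) ≥ s/(1 + s)`. -/

open Real

theorem integral_mul_exp_neg_mul (c a b : ℝ) :
    ∫ z in a..b, c * exp (-c * z) = exp (-c * a) - exp (-c * b) := by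
  have hderiv : ∀ z : ℝ, HasDerivAt (fun z => -exp (-c * z)) (c * exp (-c * z)) z := fun z =>
    ((hasDerivAt_id' z).const_mul (-c)).exp.fun_neg.congr_deriv (by ring)
  rw [intervalIntegral.integral_eq_sub_of_hasDerivAt (fun z _ => hderiv z)
    ((by fun_prop : Continuous fun z => c * exp (-c * z)).intervalIntegrable _ _)]
  ring

theorem mul_sub_mul_exp_neg_le_exp_neg_sub (c y₁ y₂ : ℝ) :
    c * (y₂ - y₁) * exp (-c * y₂) ≤ exp (-c * y₁) - exp (-c * y₂) := by
  have hsplit : exp (-c * y₁) = exp (-c * y₂) * exp (c * (y₂ - y₁)) := by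
    rw [← exp_add]; ring_nf
  have hconv := add_one_le_exp (c * (y₂ - y₁))
  rw [hsplit]
  nlinarith [exp_pos (-c * y₂)]

theorem div_one_add_le_div_add {s t L : ℝ} (hL : 0 < L) (hs : 0 ≤ s) (h : s * L ≤ t) :
    s / (1 + s) ≤ t / (L + t) := by
  have ht : 0 ≤ t := le_trans (mul_nonneg hs hL.le) h
  rw [div_le_div_iff₀ (by linarith) (by linarith)]
  nlinarith

/-- For `b, c > 0`, `0 ≤ y₁ < y₂`, `x₂ = y₂ + b − b·e^{−c·y₂}` with `x₂ < b`, the key chain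
of inequalities in the proof of Theorem 2.1:
`b·∫_{y₁}^{y₂} c·e^{−cz} dz / (y₂ − y₁ + b·∫_{y₁}^{y₂} c·e^{−cz} dz) ≥ c(b − x₂)/(1 + c(b − x₂))`. -/
theorem crowding_fraction_lower_bound (b c y₁ y₂ x₂ : ℝ) (hb : 0 < b) (hc : 0 < c)
    (hy₁ : 0 ≤ y₁) (hy₁₂ : y₁ < y₂) (hx₂ : x₂ = y₂ + b - b * Real.exp (-c * y₂))
    (hx₂b : x₂ < b) :
    b * (∫ z in y₁..y₂, c * Real.exp (-c * z)) /
        (y₂ - y₁ + b * ∫ z in y₁..y₂, c * Real.exp (-c * z)) ≥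
      c * (b - x₂) / (1 + c * (b - x₂)) := by
  have hgap : b - x₂ ≤ b * exp (-c * y₂) := by rw [hx₂]; linarith
  have hcL : 0 ≤ c * (y₂ - y₁) := mul_nonneg hc.le (by linarith)
  refine div_one_add_le_div_add (by linarith) (mul_nonneg hc.le (by linarith)) ?_
  rw [integral_mul_exp_neg_mul]
  calc c * (b - x₂) * (y₂ - y₁)
      = c * (y₂ - y₁) * (b - x₂) := by ring
    _ ≤ c * (y₂ - y₁) * (b * exp (-c * y₂)) := mul_le_mul_of_nonneg_left hgap hcL
    _ = b * (c * (y₂ - y₁) * exp (-c * y₂)) := by ring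
    _ ≤ b * (exp (-c * y₁) - exp (-c * y₂)) :=
        mul_le_mul_of_nonneg_left (mul_sub_mul_exp_neg_le_exp_neg_sub c y₁ y₂) hb.le
end

section
/- Let a, σ, v₀ > 0 satisfy (σ²/(2a))·( e^{2a·v₀/σ²} − 1 ) = 1. Let 0 ≤ y₁ < y₂ ≤ v₀, let φ(v) = e^{ 2a(v₀ − v)/σ² } − 1, and set x₂ = ∫_0^{y₂} φ(v) dv + y₂. Then ∫_{y₁}^{y₂} φ(v) dv / ( y₂ − y₁ + ∫_{y₁}^{y₂} φ(v) dv ) ≥ ( 1 − x₂ ) / ( 1 − x₂ + σ²/(2a) ). -/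
/-!
With `c = 2a/σ²` and `A = e^{c(v₀ − y₂)}`, the normalization `e^{c v₀} = 1 + c` gives
`1 − x₂ = (A − 1)/c`, so the right-hand side is `1 − 1/A`. Writing `h = y₂ − y₁` and `I` for the
integral, the left-hand side is `1 − h/(h + I)` with `h + I = A (e^{ch} − 1)/c ≥ A h`
by `1 + ch ≤ e^{ch}`.
-/

open Real

/-- The profile `φ(v) = e^{2a(v₀ − v)/σ²} − 1` of the paper, with `c = 2a/σ²`. -/
noncomputable def expProfile (c v₀ v : ℝ) : ℝ := exp (c * (v₀ - v)) - 1

section ExpProfile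

variable {c : ℝ} (v₀ : ℝ)

theorem continuous_expProfile : Continuous (expProfile c v₀) := by
  unfold expProfile; fun_prop

theorem hasDerivAt_expProfile_primitive (hc : c ≠ 0) (v : ℝ) :
    HasDerivAt (fun v => -(exp (c * (v₀ - v)) / c) - v) (expProfile c v₀ v) v := by
  have hlin : HasDerivAt (fun v => c * (v₀ - v)) (c * (-1)) v :=
    ((hasDerivAt_id v).const_sub v₀).const_mul c
  refine (((hlin.exp.div_const c).neg).sub (hasDerivAt_id v)).congr_deriv ?_
  rw [expProfile]
  field_simp

theorem integral_expProfile (hc : c ≠ 0) (s t : ℝ) :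
    ∫ v in s..t, expProfile c v₀ v =
      (exp (c * (v₀ - s)) - exp (c * (v₀ - t))) / c - (t - s) := by
  rw [intervalIntegral.integral_eq_sub_of_hasDerivAt
    (fun v _ => hasDerivAt_expProfile_primitive v₀ hc v)
    ((continuous_expProfile v₀).intervalIntegrable s t)]
  ring

theorem exp_mul_le_add_integral_expProfile (hc : 0 < c) (s t : ℝ) :
    exp (c * (v₀ - t)) * (t - s) ≤ t - s + ∫ v in s..t, expProfile c v₀ v := by
  have hsplit : exp (c * (v₀ - s)) = exp (c * (v₀ - t)) * exp (c * (t - s)) := by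
    rw [← exp_add]; ring_nf
  have hgrowth : c * (t - s) + 1 ≤ exp (c * (t - s)) := add_one_le_exp _
  rw [integral_expProfile v₀ hc.ne', hsplit]
  calc exp (c * (v₀ - t)) * (t - s) = exp (c * (v₀ - t)) * (c * (t - s)) / c := by field_simp
    _ ≤ exp (c * (v₀ - t)) * (exp (c * (t - s)) - 1) / c := by gcongr; linarith
    _ = _ := by ring

theorem one_sub_integral_expProfile_add (hc : c ≠ 0) (hnorm : exp (c * v₀) = 1 + c) (y : ℝ) :
    1 - ((∫ v in (0 : ℝ)..y, expProfile c v₀ v) + y) = (exp (c * (v₀ - y)) - 1) / c := by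
  rw [integral_expProfile v₀ hc, sub_zero, hnorm]
  field_simp
  ring

end ExpProfile

theorem one_sub_inv_le_div_add {A h I : ℝ} (hA : 0 < A) (hh : 0 < h) (hI : A * h ≤ h + I) :
    1 - A⁻¹ ≤ I / (h + I) := by
  have hpos : 0 < h + I := (mul_pos hA hh).trans_le hI
  have : h / (h + I) ≤ A⁻¹ := by
    rw [div_le_iff₀ hpos]
    calc h = A⁻¹ * (A * h) := by field_simp
      _ ≤ A⁻¹ * (h + I) := by gcongr
  calc 1 - A⁻¹ ≤ 1 - h / (h + I) := by linarith
    _ = I / (h + I) := by field_simp; ring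

theorem crowding_density_profile_bound_general (a σ v₀ y₁ y₂ x₂ : ℝ) (ha : 0 < a) (hσ : 0 < σ)
    (hnorm : σ ^ 2 / (2 * a) * (Real.exp (2 * a * v₀ / σ ^ 2) - 1) = 1)
    (hy₁₂ : y₁ < y₂)
    (φ : ℝ → ℝ) (hφ : ∀ v, φ v = Real.exp (2 * a * (v₀ - v) / σ ^ 2) - 1)
    (hx₂ : x₂ = (∫ v in (0 : ℝ)..y₂, φ v) + y₂) :
    (∫ v in y₁..y₂, φ v) / (y₂ - y₁ + ∫ v in y₁..y₂, φ v) ≥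
      (1 - x₂) / (1 - x₂ + σ ^ 2 / (2 * a)) := by
  set c := 2 * a / σ ^ 2 with hc_def
  have hc : 0 < c := by positivity
  have hscale : σ ^ 2 / (2 * a) = c⁻¹ := (inv_div _ _).symm
  have hφc : φ = expProfile c v₀ :=
    funext fun v => by rw [hφ, expProfile, hc_def, div_mul_eq_mul_div]
  have hexp : exp (c * v₀) = 1 + c := by
    rw [hscale, mul_div_right_comm, ← hc_def, inv_mul_eq_one₀ hc.ne'] at hnorm
    linarith
  subst hφc
  set A := exp (c * (v₀ - y₂))
  have hA : 0 < A := exp_pos _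
  have hrhs : (1 - x₂) / (1 - x₂ + σ ^ 2 / (2 * a)) = 1 - A⁻¹ := by
    rw [hx₂, one_sub_integral_expProfile_add v₀ hc.ne' hexp, hscale]
    field_simp
    ring
  rw [hrhs, ge_iff_le]
  exact one_sub_inv_le_div_add hA (sub_pos.2 hy₁₂)
    (exp_mul_le_add_integral_expProfile v₀ hc y₁ y₂)

/-- For `a, σ, v₀ > 0` with `(σ²/(2a))·(e^{2a·v₀/σ²} − 1) = 1`, `0 ≤ y₁ < y₂ ≤ v₀`,
`φ(v) = e^{2a(v₀ − v)/σ²} − 1` and `x₂ = ∫_0^{y₂} φ(v) dv + y₂`, one has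
`∫_{y₁}^{y₂} φ / (y₂ − y₁ + ∫_{y₁}^{y₂} φ) ≥ (1 − x₂)/(1 − x₂ + σ²/(2a))`. -/
theorem crowding_density_profile_bound (a σ v₀ y₁ y₂ x₂ : ℝ) (ha : 0 < a) (hσ : 0 < σ)
    (hv₀ : 0 < v₀)
    (hnorm : σ ^ 2 / (2 * a) * (Real.exp (2 * a * v₀ / σ ^ 2) - 1) = 1)
    (hy₁ : 0 ≤ y₁) (hy₁₂ : y₁ < y₂) (hy₂ : y₂ ≤ v₀)
    (φ : ℝ → ℝ) (hφ : ∀ v, φ v = Real.exp (2 * a * (v₀ - v) / σ ^ 2) - 1)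
    (hx₂ : x₂ = (∫ v in (0 : ℝ)..y₂, φ v) + y₂) :
    (∫ v in y₁..y₂, φ v) / (y₂ - y₁ + ∫ v in y₁..y₂, φ v) ≥
      (1 - x₂) / (1 - x₂ + σ ^ 2 / (2 * a)) :=
  crowding_density_profile_bound_general a σ v₀ y₁ y₂ x₂ ha hσ hnorm hy₁₂ φ hφ hx₂
end
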